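/- arXiv:2005.11096 — 2 statements merged into one kernel-verified Lean document; each statement's English description precedes it below -/
import Mathlib

section
/- Let (C, ∂) be a finite-dimensional filtered chain complex over ℤ/2 as above, and suppose C = C_U ⊕ C_{U^c} is a direct sum of subspaces spanned by subsets of the basis, with ∂ ∘ π_U = π_U ∘ ∂ ∘ π_U (i.e. no differential from C_{U^c} into C_U). If a cycle a representing a class α satisfies a ∈ C_U, and every basis element in C_{U^c} has action in (−δ, δ), then for any class α represented by a cycle in C_U of action level λ, one has c(α) ≤ λ; moreover if c(α) < −δ then every minimal-action representative of α lies in C_U. -/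
/-- The set of action levels at which the class of the cycle `z` is
representable; its infimum is the spectral invariant `c([z])`. -/
def specSet {ι : Type*} (A : ι → ℝ)
    (d : (ι →₀ ZMod 2) →ₗ[ZMod 2] (ι →₀ ZMod 2)) (z : ι →₀ ZMod 2) : Set ℝ :=
  {a : ℝ | ∃ z' : ι →₀ ZMod 2,
    d z' = 0 ∧ (∀ i ∈ z'.support, A i ≤ a) ∧ ∃ p, z' - z = d p}

section SpectralInvariant

variable {ι : Type*} (A : ι → ℝ) (d : (ι →₀ ZMod 2) →ₗ[ZMod 2] (ι →₀ ZMod 2))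

theorem ne_zero_of_sub_eq_of_forall_ne {z z' p : ι →₀ ZMod 2} (hα : ∀ p, d p ≠ z)
    (hp : z' - z = d p) : z' ≠ 0 := by
  rintro rfl
  exact hα (-p) (by rw [map_neg, ← hp, zero_sub, neg_neg])

theorem mem_specSet_of_forall_le {z : ι →₀ ZMod 2} (hz : d z = 0) {lam : ℝ}
    (hlam : ∀ i ∈ z.support, A i ≤ lam) : lam ∈ specSet A d z :=
  ⟨z, hz, hlam, 0, by simp⟩

/-- Every representative of a nonzero class has a basis element in its support, so the
minimum of `A` bounds the representable levels from below. -/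
theorem specSet_bddBelow [Finite ι] {z : ι →₀ ZMod 2} (hα : ∀ p, d p ≠ z) :
    BddBelow (specSet A d z) := by
  obtain ⟨m, hm⟩ := (Set.finite_range A).bddBelow
  refine ⟨m, ?_⟩
  rintro a ⟨z', -, hle, p, hp⟩
  obtain ⟨j, hj⟩ := Finsupp.support_nonempty_iff.mpr (ne_zero_of_sub_eq_of_forall_ne d hα hp)
  exact (hm (Set.mem_range_self j)).trans (hle j hj)

end SpectralInvariant

theorem support_subset_of_forall_le_of_lt_neg {ι : Type*} {A : ι → ℝ} {δ c : ℝ}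
    {SU : Set ι} (hout : ∀ i : ι, i ∉ SU → A i ∈ Set.Ioo (-δ) δ) (hc : c < -δ)
    {s : Finset ι} (hs : ∀ i ∈ s, A i ≤ c) : (s : Set ι) ⊆ SU := by
  intro i hi
  by_contra hiU
  linarith [(hout i hiU).1, hs i hi]

theorem stmt3_general {ι : Type*} [Fintype ι] (A : ι → ℝ) (δ : ℝ)
    (d : (ι →₀ ZMod 2) →ₗ[ZMod 2] (ι →₀ ZMod 2))
    (SU : Set ι)
    -- basis elements outside `U` have action in `(−δ, δ)`
    (hout : ∀ i : ι, i ∉ SU → A i ∈ Set.Ioo (-δ) δ)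
    (z : ι →₀ ZMod 2) (hz : d z = 0)
    -- the class `α = [z]` is nonzero
    (hα : ∀ p, d p ≠ z)
    (lam : ℝ) (hlam : ∀ i ∈ z.support, A i ≤ lam) :
    sInf (specSet A d z) ≤ lam ∧
    (sInf (specSet A d z) < -δ →
      ∀ z' : ι →₀ ZMod 2, d z' = 0 → (∃ p, z' - z = d p) →
        (∀ i ∈ z'.support, A i ≤ sInf (specSet A d z)) →
          (z'.support : Set ι) ⊆ SU) :=
  ⟨csInf_le (specSet_bddBelow A d hα) (mem_specSet_of_forall_le A d hz hlam),
    fun hinf _ _ _ hle => support_subset_of_forall_le_of_lt_neg hout hinf hle⟩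

/-- For a finite filtered `ℤ/2` chain complex with a basis decomposition
`C = C_U ⊕ C_{U^c}` such that `∂ ∘ π_U = π_U ∘ ∂ ∘ π_U` (the differential of a
chain supported in `U` stays supported in `U`) and every basis element outside
`U` has action in `(−δ, δ)`: if a nonzero class `α = [z]` is represented by a
cycle `z` lying in `C_U` of action level `≤ λ`, then `c(α) ≤ λ`; moreover, if
`c(α) < −δ` then every minimal-action representative of `α` lies in `C_U`. -/
theorem stmt3 {ι : Type*} [Fintype ι] (A : ι → ℝ) (δ : ℝ)
    (d : (ι →₀ ZMod 2) →ₗ[ZMod 2] (ι →₀ ZMod 2))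
    (hsq : ∀ c, d (d c) = 0)
    (hfilt : ∀ (c : ι →₀ ZMod 2) (a : ℝ),
      (∀ i ∈ c.support, A i ≤ a) → ∀ i ∈ (d c).support, A i ≤ a)
    (SU : Set ι)
    -- barricade: the differential of a chain supported in `U` is supported in `U`
    (hbar : ∀ c : ι →₀ ZMod 2, (c.support : Set ι) ⊆ SU → ((d c).support : Set ι) ⊆ SU)
    -- basis elements outside `U` have action in `(−δ, δ)`
    (hout : ∀ i : ι, i ∉ SU → A i ∈ Set.Ioo (-δ) δ)
    (z : ι →₀ ZMod 2) (hz : d z = 0)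
    -- the class `α = [z]` is nonzero
    (hα : ∀ p, d p ≠ z)
    (hzU : (z.support : Set ι) ⊆ SU)
    (lam : ℝ) (hlam : ∀ i ∈ z.support, A i ≤ lam) :
    sInf (specSet A d z) ≤ lam ∧
    (sInf (specSet A d z) < -δ →
      ∀ z' : ι →₀ ZMod 2, d z' = 0 → (∃ p, z' - z = d p) →
        (∀ i ∈ z'.support, A i ≤ sInf (specSet A d z)) →
          (z'.support : Set ι) ⊆ SU) :=
  stmt3_general A δ d SU hout z hz hα lam hlam
end

section
/- Let (C, ∂) be a chain complex over ℤ/2 with C = C_U ⊕ C_V ⊕ C_W as above (barricade conditions for both U and V). Let a, b be homologous cycles in C (i.e. a − b = ∂p for some p). Then e := π_{V^c}(a) + π_V(b) − (∂ π_V − π_V ∂)(p) is a cycle homologous to a, where π_{V^c} = π_U + π_W. -/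
/-!
Since `a - b = ∂p`, projecting gives `π_V a - π_V b = π_V ∂p`, so the mixed chain collapses to
`e = a - ∂(π_V p)`: it differs from `a` by a boundary, and is a cycle because `∂² = 0`.
-/

open scoped Classical

/-- The projection of a chain onto the subspace spanned by the basis elements
lying in `S`. -/
noncomputable def projS {ι : Type*} (S : Set ι) (c : ι →₀ ZMod 2) : ι →₀ ZMod 2 :=
  c.filter (· ∈ S)

namespace projS

variable {ι : Type*}

theorem sub (S : Set ι) (x y : ι →₀ ZMod 2) :
    projS S (x - y) = projS S x - projS S y :=
  Finsupp.filter_sub _ _ _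

theorem union_of_disjoint {S T : Set ι} (h : Disjoint S T) (c : ι →₀ ZMod 2) :
    projS (S ∪ T) c = projS S c + projS T c := by
  ext i
  by_cases hS : i ∈ S
  · simp [projS, hS, h.notMem_of_mem_left hS]
  · simp [projS, Finsupp.filter_apply, hS]

theorem compl (S : Set ι) (c : ι →₀ ZMod 2) : projS Sᶜ c = c - projS S c := by
  ext i
  by_cases hS : i ∈ S <;> simp [projS, hS]

end projS

theorem Set.union_eq_compl_of_partition {ι : Type*} {U V W : Set ι}
    (hUV : Disjoint U V) (hVW : Disjoint V W) (hcover : U ∪ V ∪ W = Set.univ) :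
    U ∪ W = Vᶜ := by
  refine IsCompl.eq_compl ⟨hUV.sup_left hVW.symm, ?_⟩
  rw [codisjoint_iff, Set.top_eq_univ, ← hcover]
  exact Set.union_right_comm U W V

theorem mixed_chain_eq {ι : Type*} (S : Set ι) {a b d : ι →₀ ZMod 2} (x : ι →₀ ZMod 2)
    (h : a - b = d) :
    (a - projS S a) + projS S b - (x - projS S d) = a - x := by
  rw [← h, projS.sub]
  abel

theorem stmt7_general {ι : Type*}
    (SU SV SW : Set ι)
    (hdUV : Disjoint SU SV) (hdUW : Disjoint SU SW) (hdVW : Disjoint SV SW)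
    (hcover : SU ∪ SV ∪ SW = Set.univ)
    (D : (ι →₀ ZMod 2) →ₗ[ZMod 2] (ι →₀ ZMod 2))
    (hsq : ∀ c, D (D c) = 0)
    (a b p : ι →₀ ZMod 2)
    (ha : D a = 0) (hp : a - b = D p) :
    D ((projS SU a + projS SW a) + projS SV b - (D (projS SV p) - projS SV (D p))) = 0 ∧
    ∃ q, a - ((projS SU a + projS SW a) + projS SV b - (D (projS SV p) - projS SV (D p)))
        = D q := by
  have hUW : projS SU a + projS SW a = a - projS SV a := by
    rw [← projS.union_of_disjoint hdUW, Set.union_eq_compl_of_partition hdUV hdVW hcover,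
      projS.compl]
  rw [hUW, mixed_chain_eq SV _ hp]
  exact ⟨by rw [map_sub, ha, hsq, sub_zero], projS SV p, sub_sub_cancel _ _⟩

/-- For a `ℤ/2` chain complex with basis decomposition `C = C_U ⊕ C_V ⊕ C_W`
satisfying the barricade conditions for both `U` and `V`, and homologous cycles
`a`, `b` (with `a − b = ∂p`), the mixed chain
`e := π_{V^c}(a) + π_V(b) − (∂ π_V − π_V ∂)(p)` (where `π_{V^c} = π_U + π_W`)
is a cycle homologous to `a`. -/
theorem stmt7 {ι : Type*} [Fintype ι]
    (SU SV SW : Set ι)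
    (hdUV : Disjoint SU SV) (hdUW : Disjoint SU SW) (hdVW : Disjoint SV SW)
    (hcover : SU ∪ SV ∪ SW = Set.univ)
    (D : (ι →₀ ZMod 2) →ₗ[ZMod 2] (ι →₀ ZMod 2))
    (hsq : ∀ c, D (D c) = 0)
    -- barricade: no differential into `C_U` except from `C_U`
    (hU : ∀ c : ι →₀ ZMod 2, projS SU (D (projS SV c + projS SW c)) = 0)
    -- barricade: no differential into `C_V` except from `C_V`
    (hV : ∀ c : ι →₀ ZMod 2, projS SV (D (projS SU c + projS SW c)) = 0)
    (a b p : ι →₀ ZMod 2)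
    (ha : D a = 0) (hb : D b = 0) (hp : a - b = D p) :
    D ((projS SU a + projS SW a) + projS SV b - (D (projS SV p) - projS SV (D p))) = 0 ∧
    ∃ q, a - ((projS SU a + projS SW a) + projS SV b - (D (projS SV p) - projS SV (D p)))
        = D q :=
  stmt7_general SU SV SW hdUV hdUW hdVW hcover D hsq a b p ha hp
end
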